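/- Let (c_p)_{p≥0} be nonnegative reals with c₀ = c₁ = 0 such that the power series Σ c_p z^p has infinite radius of convergence, and let a, u, λ > 0. Define p_N := 16^N a^N Σ_{p=0}^{N} Σ_{r₁+⋯+r_p = N−1} u^{N−p} λ^p Π_{i=1}^{p} c_{r_i} for N ≥ 1. If λ u^{−1} · Σ_r c_r (16 a u)^r < 1, then the series Σ_{N≥1} p_N converges, and its sum equals 16 a u / (1 − λ u^{−1} Σ_r c_r (16 a u)^r) evaluated as the formal power series identity Σ p_N X^N = 16 X a u / (1 − λ u^{−1} Σ_r c_r (16 X a u)^r) at X = 1. -/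

import Mathlib

inductive PTree : Type
  | node : List PTree → PTree

namespace PTree

instance : Inhabited PTree := ⟨node []⟩

/-- the single-leaf tree ∘ -/
def leaf : PTree := node []

/-- number of leaves ‖b‖ -/
def leaves : PTree → ℕ
  | node ts => if ts.isEmpty then 1 else (ts.attach.map fun t => leaves t.1).sum
decreasing_by simp only [PTree.node.sizeOf_spec]; have := List.sizeOf_lt_of_mem t.2; omega


/-- number of internal vertices |b| -/
def internals : PTree → ℕ
  | node ts => if ts.isEmpty then 0 else 1 + (ts.attach.map fun t => internals t.1).sum
decreasing_by simp only [PTree.node.sizeOf_spec]; have := List.sizeOf_lt_of_mem t.2; omega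


/-- total number of vertices N(b) -/
def Ntot (b : PTree) : ℕ := b.leaves + b.internals

/-- non-degenerate: every internal vertex has at least two children -/
def ND : PTree → Prop
  | node ts => ts.isEmpty ∨ (2 ≤ ts.length ∧ ∀ t ∈ ts.attach, ND t.1)
decreasing_by simp only [PTree.node.sizeOf_spec]; have := List.sizeOf_lt_of_mem t.2; omega


/-- the list of numbers of children of the internal vertices of b -/
def childCounts : PTree → List ℕ
  | node ts => if ts.isEmpty then [] else ts.length :: (ts.attach.map fun t => childCounts t.1).flatten
decreasing_by simp only [PTree.node.sizeOf_spec]; have := List.sizeOf_lt_of_mem t.2; omega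


mutual
/-- graft trees from the list E onto the successive leaves of b (left to right);
returns the grafted tree together with the unused suffix of E. -/
def graft : PTree → List PTree → PTree × List PTree
  | node ts, E =>
    if ts.isEmpty then (E.headI, E.tail)
    else
      let p := graftL ts E
      (node p.1, p.2)
/-- graft trees from the list E onto the leaves of the forest l -/
def graftL : List PTree → List PTree → List PTree × List PTree
  | [], E => ([], E)
  | t :: ts, E =>
    let p := graft t E
    let q := graftL ts p.2
    (p.1 :: q.1, q.2)
end

/-- E ∝ b : graft the tuple E onto the leaves of b -/
def graftT (b : PTree) (E : List PTree) : PTree := (b.graft E).1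

mutual
/-- the list of all decompositions b = E ∝ c, as pairs (c, E) -/
def decomps : PTree → List (PTree × List PTree)
  | node ts =>
    (leaf, [node ts]) ::
      (if ts.isEmpty then []
       else (decompsL ts).map fun p => (node p.1, p.2))
/-- decompositions of a forest: pairs (list of bases, concatenated grafted tuples) -/
def decompsL : List PTree → List (List PTree × List PTree)
  | [] => [([], [])]
  | t :: ts =>
    (decomps t).flatMap fun p => (decompsL ts).map fun q => (p.1 :: q.1, p.2 ++ q.2)
end

theorem leaves_pos : ∀ b : PTree, 0 < b.leaves
  | node ts => by
    show 0 < leaves (node ts)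
    unfold leaves
    split
    · exact one_pos
    · rename_i h
      have hne : ts ≠ [] := by simpa [List.isEmpty_iff] using h
      obtain ⟨t, ts', rfl⟩ := List.exists_cons_of_ne_nil hne
      have := leaves_pos t
      simp only [List.attach_cons, List.map_cons, List.sum_cons]
      positivity

end PTree


open scoped ENNReal in
lemma GFE.tsum_pi_prod (g : ℕ → ℝ≥0∞) : ∀ q : ℕ,
    ∑' r : Fin q → ℕ, ∏ i, g (r i) = (∑' n, g n) ^ q
  | 0 => by
    simp only [Finset.univ_eq_empty, Finset.prod_empty, pow_zero]
    exact tsum_eq_single (fun _ => (0 : ℕ)) fun b hb =>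
      absurd (Subsingleton.elim b _) hb
  | (q + 1) => by
    rw [← (Fin.consEquiv fun _ => ℕ).tsum_eq fun r => ∏ i, g (r i)]
    have he : ∀ p : ℕ × (Fin q → ℕ),
        (∏ i, g ((Fin.cons p.1 p.2 : Fin (q + 1) → ℕ) i)) = g p.1 * ∏ i, g (p.2 i) := by
      intro p
      rw [Fin.prod_univ_succ]
      simp
    simp only [Fin.consEquiv_apply, he]
    rw [ENNReal.tsum_prod']
    simp only [ENNReal.tsum_mul_left]
    rw [ENNReal.tsum_mul_right, GFE.tsum_pi_prod g q, pow_succ']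

open scoped ENNReal in
lemma GFE.tsum_antidiagonalTuple_prod (g : ℕ → ℝ≥0∞) (q : ℕ) :
    ∑' m : ℕ, ∑ r ∈ Finset.Nat.antidiagonalTuple q m, ∏ i, g (r i)
      = (∑' n, g n) ^ q := by
  rw [← GFE.tsum_pi_prod g q,
    ← (Finset.Nat.sigmaAntidiagonalTupleEquivTuple q).tsum_eq fun r => ∏ i, g (r i),
    ENNReal.tsum_sigma']
  refine tsum_congr fun m => ?_
  rw [← Finset.tsum_subtype (Finset.Nat.antidiagonalTuple q m) fun r => ∏ i, g (r i)]
  rfl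

/-- the generating-function estimate for the Butcher series:
if λ u⁻¹ Σ_r c_r (16 a u)^r < 1 then Σ_{N≥1} p_N converges, with sum
16 a u / (1 − λ u⁻¹ Σ_r c_r (16 a u)^r). -/
theorem generating_function_estimate (c : ℕ → ℝ) (hc : ∀ p, 0 ≤ c p)
    (hc0 : c 0 = 0) (hc1 : c 1 = 0)
    (hent : ∀ z : ℝ, Summable fun p => c p * z ^ p)
    (a u lam : ℝ) (ha : 0 < a) (hu : 0 < u) (hlam : 0 < lam)
    (p : ℕ → ℝ)
    (hp : ∀ N : ℕ, 1 ≤ N → p N = 16 ^ N * a ^ N *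
      ∑ q ∈ Finset.range (N + 1), ∑ r ∈ Finset.Nat.antidiagonalTuple q (N - 1),
        u ^ (N - q) * lam ^ q * ∏ i, c (r i))
    (hcond : lam * u⁻¹ * (∑' r : ℕ, c r * (16 * a * u) ^ r) < 1) :
    Summable (fun N : ℕ => p (N + 1)) ∧
      ∑' N : ℕ, p (N + 1) =
        16 * a * u / (1 - lam * u⁻¹ * ∑' r : ℕ, c r * (16 * a * u) ^ r) := by
  set z : ℝ := 16 * a * u with hz_def
  have hz : 0 < z := by rw [hz_def]; positivity
  set y : ℝ := lam * u⁻¹ with hy_def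
  have hy : 0 < y := by rw [hy_def]; positivity
  set S : ℝ := ∑' r : ℕ, c r * z ^ r with hS_def
  have hSsum : Summable fun r : ℕ => c r * z ^ r := hent z
  have hS0 : 0 ≤ S := tsum_nonneg fun r => mul_nonneg (hc r) (pow_nonneg hz.le r)
  set x : ℝ := y * S with hx_def
  have hx0 : 0 ≤ x := mul_nonneg hy.le hS0
  have hx1 : x < 1 := hcond
  -- rewrite p (N+1) in product form
  have key : ∀ N : ℕ, p (N + 1) = z * ∑ q ∈ Finset.range (N + 2),
      y ^ q * ∑ r ∈ Finset.Nat.antidiagonalTuple q N, ∏ i, (c (r i) * z ^ (r i)) := by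
    intro N
    rw [hp (N + 1) (Nat.le_add_left 1 N)]
    have hNN : N + 1 - 1 = N := rfl
    rw [hNN]
    simp only [Finset.mul_sum]
    refine Finset.sum_congr rfl fun q hq => ?_
    refine Finset.sum_congr rfl fun r hr => ?_
    have hrs : ∑ i, r i = N := Finset.Nat.mem_antidiagonalTuple.mp hr
    have hq' : q ≤ N + 1 := Nat.lt_succ_iff.mp (Finset.mem_range.mp hq)
    rw [Finset.prod_mul_distrib, Finset.prod_pow_eq_pow_sum, hrs,
      pow_sub₀ u hu.ne' hq', hz_def, hy_def]
    field_simp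
    have hu' : u ^ q * u⁻¹ ^ q = 1 := by rw [← mul_pow, mul_inv_cancel₀ hu.ne', one_pow]
    linear_combination (a * a ^ N * u * u ^ N * lam ^ q * (∏ i, c (r i)) * 16 ^ N * 16) * hu'.symm
  have hpnn : ∀ N : ℕ, 0 ≤ p (N + 1) := by
    intro N
    rw [key N]
    refine mul_nonneg hz.le (Finset.sum_nonneg fun q _ => mul_nonneg (pow_nonneg hy.le q)
      (Finset.sum_nonneg fun r _ => Finset.prod_nonneg fun i _ =>
        mul_nonneg (hc _) (pow_nonneg hz.le _)))
  -- zero tuples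
  have hzero : ∀ q N : ℕ, N < q → ∀ r ∈ Finset.Nat.antidiagonalTuple q N, ∃ i, r i = 0 := by
    intro q N hNq r hr
    have hrs : ∑ i, r i = N := Finset.Nat.mem_antidiagonalTuple.mp hr
    by_contra h
    push_neg at h
    have hqle : q ≤ ∑ i, r i := by
      calc q = ∑ _i : Fin q, 1 := by simp
        _ ≤ ∑ i, r i := Finset.sum_le_sum fun i _ => Nat.one_le_iff_ne_zero.mpr (h i)
    omega
  -- ENNReal side
  set g : ℕ → ENNReal := fun r => ENNReal.ofReal (c r * z ^ r) with hg_def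
  have hSg : ∑' r : ℕ, g r = ENNReal.ofReal S :=
    (ENNReal.ofReal_tsum_of_nonneg (fun r => mul_nonneg (hc r) (pow_nonneg hz.le r)) hSsum).symm
  have hofp : ∀ N : ℕ, ENNReal.ofReal (p (N + 1)) =
      ENNReal.ofReal z * ∑' q : ℕ, (ENNReal.ofReal y) ^ q *
        ∑ r ∈ Finset.Nat.antidiagonalTuple q N, ∏ i, g (r i) := by
    intro N
    have hsupp : ∀ q ∉ Finset.range (N + 2), (ENNReal.ofReal y) ^ q *
        ∑ r ∈ Finset.Nat.antidiagonalTuple q N, ∏ i, g (r i) = 0 := by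
      intro q hq
      have hNq : N < q := by
        have := Finset.mem_range.not.mp hq
        omega
      have : ∑ r ∈ Finset.Nat.antidiagonalTuple q N, ∏ i, g (r i) = 0 := by
        refine Finset.sum_eq_zero fun r hr => ?_
        obtain ⟨i, hi⟩ := hzero q N hNq r hr
        refine Finset.prod_eq_zero (Finset.mem_univ i) ?_
        simp [hg_def, hi, hc0]
      rw [this, mul_zero]
    rw [tsum_eq_sum hsupp, key N, ENNReal.ofReal_mul hz.le,
      ENNReal.ofReal_sum_of_nonneg (fun q _ => mul_nonneg (pow_nonneg hy.le q)
        (Finset.sum_nonneg fun r _ => Finset.prod_nonneg fun i _ =>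
          mul_nonneg (hc _) (pow_nonneg hz.le _)))]
    congr 1
    refine Finset.sum_congr rfl fun q _ => ?_
    rw [ENNReal.ofReal_mul (pow_nonneg hy.le q), ENNReal.ofReal_pow hy.le,
      ENNReal.ofReal_sum_of_nonneg (fun r _ => Finset.prod_nonneg fun i _ =>
        mul_nonneg (hc _) (pow_nonneg hz.le _))]
    congr 1
    refine Finset.sum_congr rfl fun r _ => ?_
    exact ENNReal.ofReal_prod_of_nonneg fun i _ => mul_nonneg (hc _) (pow_nonneg hz.le _)
  have hT : ∑' N : ℕ, ENNReal.ofReal (p (N + 1)) =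
      ENNReal.ofReal z * (1 - ENNReal.ofReal x)⁻¹ := by
    simp only [hofp]
    rw [ENNReal.tsum_mul_left]
    congr 1
    rw [ENNReal.tsum_comm]
    calc ∑' q : ℕ, ∑' N : ℕ, (ENNReal.ofReal y) ^ q *
          ∑ r ∈ Finset.Nat.antidiagonalTuple q N, ∏ i, g (r i)
        = ∑' q : ℕ, (ENNReal.ofReal y) ^ q *
          ∑' N : ℕ, ∑ r ∈ Finset.Nat.antidiagonalTuple q N, ∏ i, g (r i) := by
          simp only [ENNReal.tsum_mul_left]
      _ = ∑' q : ℕ, (ENNReal.ofReal y * ENNReal.ofReal S) ^ q := by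
          refine tsum_congr fun q => ?_
          rw [GFE.tsum_antidiagonalTuple_prod g q, hSg, mul_pow]
      _ = (1 - ENNReal.ofReal y * ENNReal.ofReal S)⁻¹ := ENNReal.tsum_geometric _
      _ = (1 - ENNReal.ofReal x)⁻¹ := by rw [← ENNReal.ofReal_mul hy.le, ← hx_def]
  have h1x : 0 < 1 - x := by linarith
  have hsub_ne : (1 : ENNReal) - ENNReal.ofReal x ≠ 0 := by
    have : ENNReal.ofReal x < 1 := ENNReal.ofReal_lt_one.mpr hx1
    exact (tsub_pos_iff_lt.mpr this).ne'
  have hTne : (∑' N : ℕ, ENNReal.ofReal (p (N + 1))) ≠ ⊤ := by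
    rw [hT]
    exact ENNReal.mul_ne_top ENNReal.ofReal_ne_top (ENNReal.inv_ne_top.mpr hsub_ne)
  have hsummable : Summable fun N : ℕ => p (N + 1) := by
    have h1 : Summable fun N : ℕ => (p (N + 1)).toNNReal :=
      ENNReal.tsum_coe_ne_top_iff_summable.mp hTne
    have h2 := NNReal.summable_coe.mpr h1
    refine h2.congr fun N => ?_
    exact Real.coe_toNNReal _ (hpnn N)
  refine ⟨hsummable, ?_⟩
  rw [← ENNReal.ofReal_eq_ofReal_iff (tsum_nonneg fun N => hpnn N)
    (div_nonneg hz.le h1x.le)]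
  rw [ENNReal.ofReal_tsum_of_nonneg hpnn hsummable, hT, div_eq_mul_inv,
    ENNReal.ofReal_mul hz.le, ENNReal.ofReal_inv_of_pos h1x,
    ENNReal.ofReal_sub 1 hx0, ENNReal.ofReal_one]
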